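/- arXiv:cs/9810007 — 6 statements merged into one kernel-verified Lean document; each statement's English description precedes it below -/
import Mathlib

section
/- The expected number of regions created by the insertion of the k-th object is at most b·f(k)/k, where f(r) is the expected number of empty regions of a random r-sample and b bounds the number of objects defining a region. -/
/-!
Backwards analysis. For a uniformly random insertion order, the pair formed by the set of the
first `k` objects and the `k`-th object is uniformly distributed over the pointed `k`-subsets
`(R, j)`, `j ∈ R`, since permutations act transitively on them. So the expected number of
regions created at stage `k` is the average over `k`-subsets `R` of `1/k` times the number of
pairs `(j, F)` with `F` empty for `R` and `j ∈ D F`, and each such `F` occurs with at most `b`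
objects `j`.
-/

open Finset

/-- The set of the first `k` objects of the ordering `σ` (positions `0,…,k-1`). -/
def firstObjects (n : ℕ) (σ : Equiv.Perm (Fin n)) (k : ℕ) : Finset (Fin n) :=
  (Finset.univ.filter (fun i : Fin n => (i : ℕ) < k)).image σ

open scoped Nat

section Uniformity

variable {n k : ℕ}

theorem card_firstObjects (hkn : k ≤ n) (σ : Equiv.Perm (Fin n)) :
    #(firstObjects n σ k) = k := by
  rw [firstObjects, card_image_of_injective _ σ.injective, Fin.card_filter_val_lt,
    min_eq_right hkn]

theorem firstObjects_trans (σ π : Equiv.Perm (Fin n)) :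
    firstObjects n (σ.trans π) k = (firstObjects n σ k).image π := by
  simp only [firstObjects, image_image]
  rfl

theorem Equiv.Perm.exists_image_eq_and_apply_eq {α : Type*} [DecidableEq α]
    {R R' : Finset α} (hR : #R = #R') {j j' : α} (hj : j ∈ R) (hj' : j' ∈ R') :
    ∃ π : Equiv.Perm α, R.image π = R' ∧ π j = j' := by
  let e₀ : R ≃ R' := equivOfCardEq hR
  let e : R ≃ R' := e₀.trans (Equiv.swap (e₀ ⟨j, hj⟩) ⟨j', hj'⟩)
  refine ⟨e.extendSubtype, eq_of_subset_of_card_le ?_ ?_, ?_⟩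
  · intro y hy
    obtain ⟨x, hx, rfl⟩ := mem_image.mp hy
    exact e.extendSubtype_mem x hx
  · rw [card_image_of_injective _ (Equiv.injective _), hR]
  · simp [e, e.extendSubtype_apply_of_mem j hj]

def pointedFirstObjects (n k : ℕ) (i : Fin n) (σ : Equiv.Perm (Fin n)) :
    Σ _ : Finset (Fin n), Fin n :=
  ⟨firstObjects n σ k, σ i⟩

def pointedSubsets (n k : ℕ) : Finset (Σ _ : Finset (Fin n), Fin n) :=
  (powersetCard k univ).sigma id

theorem mem_pointedSubsets {p : Σ _ : Finset (Fin n), Fin n} :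
    p ∈ pointedSubsets n k ↔ #p.1 = k ∧ p.2 ∈ p.1 := by
  simp [pointedSubsets, mem_sigma, mem_powersetCard]

theorem card_pointedSubsets : #(pointedSubsets n k) = n.choose k * k := by
  simp only [pointedSubsets, card_sigma, id]
  rw [sum_const_nat fun R hR => (mem_powersetCard.mp hR).2,
    card_powersetCard, card_univ, Fintype.card_fin]

theorem pointedFirstObjects_mem_pointedSubsets {i : Fin n} (hi : (i : ℕ) < k) (hkn : k ≤ n)
    (σ : Equiv.Perm (Fin n)) : pointedFirstObjects n k i σ ∈ pointedSubsets n k :=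
  mem_pointedSubsets.mpr
    ⟨card_firstObjects hkn σ, mem_image_of_mem σ (by simpa using hi)⟩

theorem card_fiber_pointedFirstObjects_le (i : Fin n) {p q : Σ _ : Finset (Fin n), Fin n}
    (hp : p ∈ pointedSubsets n k) (hq : q ∈ pointedSubsets n k) :
    #{σ | pointedFirstObjects n k i σ = p} ≤ #{σ | pointedFirstObjects n k i σ = q} := by
  rw [mem_pointedSubsets] at hp hq
  obtain ⟨π, hπR, hπj⟩ :=
    Equiv.Perm.exists_image_eq_and_apply_eq (hp.1.trans hq.1.symm) hp.2 hq.2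
  refine card_le_card_of_injOn (fun σ => σ.trans π) (fun σ hσ => ?_)
    fun _ _ _ _ h => mul_left_cancel (a := π) h
  simp only [coe_filter, mem_univ, true_and, Set.mem_ofPred_eq, pointedFirstObjects,
    Sigma.ext_iff, heq_iff_eq] at hσ ⊢
  rw [firstObjects_trans, hσ.1, Equiv.trans_apply, hσ.2, hπR, hπj]
  exact ⟨rfl, rfl⟩

theorem choose_mul_card_fiber_pointedFirstObjects {i : Fin n} (hi : (i : ℕ) < k) (hkn : k ≤ n)
    {p : Σ _ : Finset (Fin n), Fin n} (hp : p ∈ pointedSubsets n k) :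
    n.choose k * k * #{σ | pointedFirstObjects n k i σ = p} = n ! := by
  have hfibers := card_eq_sum_card_fiberwise (s := univ) (t := pointedSubsets n k)
    fun σ _ => pointedFirstObjects_mem_pointedSubsets hi hkn σ
  rw [card_univ, Fintype.card_perm, Fintype.card_fin] at hfibers
  rw [hfibers, sum_congr rfl fun q hq => le_antisymm
      (card_fiber_pointedFirstObjects_le i hq hp) (card_fiber_pointedFirstObjects_le i hp hq),
    sum_const, card_pointedSubsets, smul_eq_mul]

theorem choose_mul_smul_sum_perm_eq {M : Type*} [AddCommMonoid M] {i : Fin n}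
    (hi : (i : ℕ) < k) (hkn : k ≤ n) (f : Finset (Fin n) → Fin n → M) :
    (n.choose k * k) • ∑ σ, f (firstObjects n σ k) (σ i) =
      n ! • ∑ R ∈ powersetCard k univ, ∑ j ∈ R, f R j := by
  have hmaps : ∀ σ ∈ (univ : Finset (Equiv.Perm (Fin n))),
      pointedFirstObjects n k i σ ∈ pointedSubsets n k :=
    fun σ _ => pointedFirstObjects_mem_pointedSubsets hi hkn σ
  calc (n.choose k * k) • ∑ σ, f (firstObjects n σ k) (σ i)
      = ∑ p ∈ pointedSubsets n k,
          (n.choose k * k * #{σ | pointedFirstObjects n k i σ = p}) • f p.1 p.2 := by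
        rw [← sum_fiberwise_of_maps_to hmaps, smul_sum]
        refine sum_congr rfl fun p _ => ?_
        have hconst : ∀ σ ∈ ({σ | pointedFirstObjects n k i σ = p} : Finset _),
            f (firstObjects n σ k) (σ i) = f p.1 p.2 := by
          intro σ hσ
          rw [← (mem_filter.mp hσ).2]
          rfl
        rw [sum_congr rfl hconst, sum_const, ← mul_smul]
    _ = n ! • ∑ R ∈ powersetCard k univ, ∑ j ∈ R, f R j := by
        rw [sum_congr rfl fun p hp => by rw [choose_mul_card_fiber_pointedFirstObjects hi hkn hp],
          ← smul_sum, pointedSubsets, sum_sigma]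
        rfl

end Uniformity

theorem sum_card_filter_mem_le {ι α : Type*} [DecidableEq α] (s : Finset ι) (t : Finset α)
    (D : ι → Finset α) {b : ℕ} (hD : ∀ F ∈ s, #(D F) ≤ b) :
    ∑ j ∈ t, #{F ∈ s | j ∈ D F} ≤ b * #s :=
  calc ∑ j ∈ t, #{F ∈ s | j ∈ D F}
      = ∑ F ∈ s, #{j ∈ t | j ∈ D F} :=
        sum_card_bipartiteAbove_eq_sum_card_bipartiteBelow (fun j F => j ∈ D F)
    _ ≤ ∑ _F ∈ s, b :=
        sum_le_sum fun F hF => (card_le_card fun _ hj => (mem_filter.mp hj).2).trans (hD F hF)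
    _ = b * #s := by rw [sum_const, smul_eq_mul, mul_comm]

def emptyRegions {n : ℕ} {Region : Type} [Fintype Region] (D : Region → Finset (Fin n))
    (conflict : Fin n → Region → Prop) [∀ o F, Decidable (conflict o F)]
    (R : Finset (Fin n)) : Finset Region :=
  {F | D F ⊆ R ∧ ∀ x ∈ R, ¬ conflict x F}

/-- Lemma 2 of the paper: objects `Fin n` are inserted in a uniformly random order.
A region `F` is defined by the objects `D F`, at most `b` of them.  A region is *created at
stage `k`* if it is empty with respect to the first `k` objects (its defining objects are
among the first `k` and none of the first `k` conflicts with it) and the `k`-th inserted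
object (position `k-1`) is one of its defining objects.  The expected number of regions
created at stage `k` is at most `b · f(k) / k`, where `f(r)` is the expected number of
empty regions of a uniform random `r`-sample. -/
theorem expected_created_le
    (n b k : ℕ) (hk : 1 ≤ k) (hkn : k ≤ n)
    {Region : Type} [Fintype Region] (D : Region → Finset (Fin n))
    (conflict : Fin n → Region → Prop) [∀ o F, Decidable (conflict o F)]
    (hD : ∀ F, (D F).card ≤ b) :
    (∑ σ : Equiv.Perm (Fin n),
        ((Finset.univ.filter (fun F : Region =>
          D F ⊆ firstObjects n σ k ∧
          (∀ x ∈ firstObjects n σ k, ¬ conflict x F) ∧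
          σ ⟨k - 1, by omega⟩ ∈ D F)).card : ℝ))
      / (Nat.factorial n : ℝ)
    ≤ (b : ℝ) *
        ((∑ R ∈ Finset.univ.powersetCard k,
            ((Finset.univ.filter (fun F : Region =>
              D F ⊆ R ∧ ∀ x ∈ R, ¬ conflict x F)).card : ℝ))
          / (Nat.choose n k : ℝ)) / (k : ℝ) := by
  let created (R : Finset (Fin n)) (j : Fin n) : ℝ :=
    #{F ∈ emptyRegions D conflict R | j ∈ D F}
  have hcreated (R : Finset (Fin n)) (j : Fin n) :
      (#{F : Region | D F ⊆ R ∧ (∀ x ∈ R, ¬ conflict x F) ∧ j ∈ D F} : ℝ) =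
        created R j := by
    simp only [created, emptyRegions, filter_filter, and_assoc]
  have hchoose : (0 : ℝ) < n.choose k * k := by
    have := Nat.choose_pos hkn
    positivity
  have huniform : (∑ σ, created (firstObjects n σ k) (σ ⟨k - 1, by omega⟩)) / n ! =
      (∑ R ∈ powersetCard k univ, ∑ j ∈ R, created R j) / (n.choose k * k) := by
    have h := choose_mul_smul_sum_perm_eq (i := ⟨k - 1, by omega⟩) (by simp; omega) hkn created
    rw [nsmul_eq_mul, nsmul_eq_mul, Nat.cast_mul] at h
    rw [div_eq_div_iff (by positivity) hchoose.ne']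
    linarith
  simp only [hcreated, huniform]
  calc (∑ R ∈ powersetCard k univ, ∑ j ∈ R, created R j) / (n.choose k * k)
      ≤ (∑ R ∈ powersetCard k univ, (b : ℝ) * #(emptyRegions D conflict R)) /
          (n.choose k * k) := by
        gcongr with R
        simp only [created]
        exact_mod_cast sum_card_filter_mem_le (emptyRegions D conflict R) R D fun F _ => hD F
    _ = _ := by
        simp only [← mul_sum, mul_div_assoc, div_div]
        rfl
end

section
/- For k < l, the expected number of conflicts between regions created at stage k and the l-th inserted object is at most (b/k)·f'(k+1)/(k+1). -/
open Finset

open Nat in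
lemma perm_count_le {n : ℕ} (A B : Finset (Fin n)) (a x : Fin n)
    (ha : a ∉ A) (hx : x ∉ B) (hAB : A.card = B.card) :
    (Finset.univ.filter (fun σ : Equiv.Perm (Fin n) =>
      (∀ i, i ∈ A ↔ σ i ∈ B) ∧ σ a = x)).card
      ≤ (A.card)! * (n - A.card - 1)! := by
  classical
  rw [← Fintype.card_subtype]
  have cardA : Fintype.card {i : Fin n // i ∈ A} = A.card := Fintype.card_coe A
  have cardB : Fintype.card {i : Fin n // i ∈ B} = B.card := Fintype.card_coe B
  have cA : Fintype.card {i : Fin n // i ∉ A ∧ i ≠ a} = n - A.card - 1 := by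
    rw [Fintype.card_subtype]
    have : (univ.filter (fun i : Fin n => i ∉ A ∧ i ≠ a)) = (insert a A)ᶜ := by
      ext i
      simp [Finset.mem_compl, Finset.mem_insert, and_comm, or_comm]
    rw [this, Finset.card_compl, Finset.card_insert_of_notMem ha, Fintype.card_fin]
    omega
  have cB : Fintype.card {i : Fin n // i ∉ B ∧ i ≠ x} = n - A.card - 1 := by
    rw [Fintype.card_subtype]
    have : (univ.filter (fun i : Fin n => i ∉ B ∧ i ≠ x)) = (insert x B)ᶜ := by
      ext i
      simp [Finset.mem_compl, Finset.mem_insert, and_comm, or_comm]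
    rw [this, Finset.card_compl, Finset.card_insert_of_notMem hx, Fintype.card_fin]
    omega
  have hcardT : Fintype.card
      (({i : Fin n // i ∈ A} ≃ {i : Fin n // i ∈ B}) ×
       ({i : Fin n // i ∉ A ∧ i ≠ a} ≃ {i : Fin n // i ∉ B ∧ i ≠ x}))
      = (A.card)! * (n - A.card - 1)! := by
    rw [Fintype.card_prod,
      Fintype.card_equiv (Fintype.equivOfCardEq (by rw [cardA, cardB, hAB])),
      Fintype.card_equiv (Fintype.equivOfCardEq (by rw [cA, cB])), cardA, cA]
  rw [← hcardT]
  apply Fintype.card_le_of_injective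
    (fun σp => (⟨(σp.1 : Equiv.Perm (Fin n)).subtypeEquiv (fun i => σp.2.1 i),
      (σp.1 : Equiv.Perm (Fin n)).subtypeEquiv (fun i => by
        have h1 := σp.2.1 i
        have h2 : σp.1 i = x ↔ i = a := by
          constructor
          · intro h; exact σp.1.injective (h.trans σp.2.2.symm)
          · intro h; rw [h]; exact σp.2.2
        constructor
        · rintro ⟨hiA, hia⟩; exact ⟨fun hb => hiA (h1.mpr hb), fun hb => hia (h2.mp hb)⟩
        · rintro ⟨hiB, hix⟩; exact ⟨fun hb => hiB (h1.mp hb), fun hb => hix (h2.mpr hb)⟩)⟩))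
  rintro ⟨σ, hσ⟩ ⟨τ, hτ⟩ heq
  simp only [Prod.mk.injEq] at heq
  ext i
  by_cases hiA : i ∈ A
  · have := congrArg (fun e => (e ⟨i, hiA⟩ : Fin n)) heq.1
    simp only [Equiv.subtypeEquiv_apply] at this
    exact congrArg Fin.val this
  · by_cases hia : i = a
    · subst hia; rw [hσ.2, hτ.2]
    · have := congrArg (fun e => (e ⟨i, ⟨hiA, hia⟩⟩ : Fin n)) heq.2
      simp only [Equiv.subtypeEquiv_apply] at this
      exact congrArg Fin.val this

lemma swap_count {α β : Type*} [DecidableEq α] [DecidableEq β]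
    (s : Finset α) (t : Finset β)
    (p : α → β → Prop) [∀ a b, Decidable (p a b)] :
    ∑ a ∈ s, (t.filter (p a)).card = ∑ b ∈ t, (s.filter (fun a => p a b)).card := by
  simp_rw [Finset.card_filter]
  exact Finset.sum_comm

open Nat in
lemma step2 {n k l : ℕ} (hk : 1 ≤ k) (hkl : k < l) (hln : l ≤ n)
    {Region : Type} [Fintype Region] (D : Region → Finset (Fin n))
    (conflict : Fin n → Region → Prop) [∀ o F, Decidable (conflict o F)]
    (al : Fin n) (hal : (al : ℕ) = l - 1) (F : Region) :
    (univ.filter (fun σ : Equiv.Perm (Fin n) =>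
        D F ⊆ firstObjects n σ k ∧ (∀ x ∈ firstObjects n σ k, ¬ conflict x F) ∧
        conflict (σ al) F)).card
      ≤ k ! * (n - k - 1)! *
        ((univ.powersetCard (k+1)).filter
          (fun R => D F ⊆ R ∧ (R.filter (fun x => conflict x F)).card = 1)).card := by
  classical
  have hkn : k < n := lt_of_lt_of_le hkl hln
  set A : Finset (Fin n) := univ.filter (fun i : Fin n => (i:ℕ) < k) with hA
  have hAcard : A.card = k := by
    have : A = Finset.map (Fin.castLEEmb hkn.le) univ := by
      ext i
      simp only [hA, mem_filter, mem_univ, true_and, Finset.mem_map, Fin.castLEEmb_apply]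
      constructor
      · intro hi
        refine ⟨⟨i, hi⟩, ?_⟩
        simp [Fin.ext_iff]
      · rintro ⟨j, hj, rfl⟩; simp [j.isLt]
    rw [this]; simp
  have hal_notA : al ∉ A := by
    simp only [hA, mem_filter, mem_univ, true_and, hal, not_lt]
    omega
  have hfirst : ∀ σ : Equiv.Perm (Fin n), firstObjects n σ k = A.image σ := fun _ => rfl
  have hfcard : ∀ σ : Equiv.Perm (Fin n), (firstObjects n σ k).card = k := by
    intro σ; rw [hfirst, Finset.card_image_of_injective _ σ.injective, hAcard]
  have hmemfirst : ∀ (σ : Equiv.Perm (Fin n)) (i : Fin n),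
      σ i ∈ firstObjects n σ k ↔ i ∈ A := by
    intro σ i
    rw [hfirst]
    constructor
    · intro h
      obtain ⟨j, hj, hji⟩ := Finset.mem_image.mp h
      rwa [← σ.injective hji]
    · exact fun h => Finset.mem_image_of_mem _ h
  have hσal : ∀ σ : Equiv.Perm (Fin n), σ al ∉ firstObjects n σ k := by
    intro σ h
    exact hal_notA ((hmemfirst σ al).mp h)
  set T := ((univ.powersetCard (k+1)).filter
      (fun R => D F ⊆ R ∧ (R.filter (fun x => conflict x F)).card = 1)) with hT
  have hmaps : ∀ σ ∈ (univ.filter (fun σ : Equiv.Perm (Fin n) =>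
      D F ⊆ firstObjects n σ k ∧ (∀ x ∈ firstObjects n σ k, ¬ conflict x F) ∧
      conflict (σ al) F)),
      insert (σ al) (firstObjects n σ k) ∈ T := by
    intro σ hσ
    rw [mem_filter] at hσ
    obtain ⟨-, hD2, hnc, hc⟩ := hσ
    have hfil : (insert (σ al) (firstObjects n σ k)).filter (fun x => conflict x F)
        = {σ al} := by
      ext y
      simp only [mem_filter, mem_insert, mem_singleton]
      constructor
      · rintro ⟨hy | hy, hcy⟩
        · exact hy
        · exact absurd hcy (hnc y hy)
      · rintro rfl; exact ⟨Or.inl rfl, hc⟩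
    rw [hT, mem_filter]
    refine ⟨Finset.mem_powersetCard_univ.mpr ?_, ?_, ?_⟩
    · rw [Finset.card_insert_of_notMem (hσal σ), hfcard]
    · exact hD2.trans (Finset.subset_insert _ _)
    · rw [hfil]; simp
  rw [Finset.card_eq_sum_card_fiberwise hmaps]
  have hbound : ∀ R ∈ T,
      ((univ.filter (fun σ : Equiv.Perm (Fin n) =>
        D F ⊆ firstObjects n σ k ∧ (∀ x ∈ firstObjects n σ k, ¬ conflict x F) ∧
        conflict (σ al) F)).filter
        (fun σ => insert (σ al) (firstObjects n σ k) = R)).card ≤ k ! * (n - k - 1)! := by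
    intro R hR
    rw [hT, mem_filter] at hR
    obtain ⟨hRmem, hDR, hone⟩ := hR
    have hRcard : R.card = k + 1 := Finset.mem_powersetCard_univ.mp hRmem
    obtain ⟨x, hxfil⟩ := Finset.card_eq_one.mp hone
    have hxR : x ∈ R ∧ conflict x F := by
      have : x ∈ R.filter (fun y => conflict y F) := by rw [hxfil]; exact mem_singleton_self x
      exact mem_filter.mp this |>.imp id id
    have hxB : x ∉ R.erase x := Finset.notMem_erase x R
    have hBcard : (R.erase x).card = k := by
      rw [Finset.card_erase_of_mem hxR.1, hRcard]
      omega
    have hsub : ((univ.filter (fun σ : Equiv.Perm (Fin n) =>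
        D F ⊆ firstObjects n σ k ∧ (∀ x ∈ firstObjects n σ k, ¬ conflict x F) ∧
        conflict (σ al) F)).filter
        (fun σ => insert (σ al) (firstObjects n σ k) = R))
        ⊆ (univ.filter (fun σ : Equiv.Perm (Fin n) =>
          (∀ i, i ∈ A ↔ σ i ∈ R.erase x) ∧ σ al = x)) := by
      intro σ hσ
      simp only [mem_filter, mem_univ, true_and] at hσ ⊢
      obtain ⟨⟨hD2, hnc, hc⟩, hgR⟩ := hσ
      have halx : σ al = x := by
        have h1 : σ al ∈ R.filter (fun y => conflict y F) := by
          rw [mem_filter]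
          exact ⟨hgR ▸ Finset.mem_insert_self _ _, hc⟩
        rw [hxfil, mem_singleton] at h1
        exact h1
      have hBfirst : R.erase x = firstObjects n σ k := by
        rw [← hgR, ← halx, Finset.erase_insert (hσal σ)]
      refine ⟨fun i => ?_, halx⟩
      rw [hBfirst, ← hmemfirst σ i]
    calc _ ≤ _ := Finset.card_le_card hsub
      _ ≤ (A.card)! * (n - A.card - 1)! :=
        perm_count_le A (R.erase x) al x hal_notA hxB (by rw [hAcard, hBcard])
      _ = k ! * (n - k - 1)! := by rw [hAcard]
  calc ∑ R ∈ T, _ ≤ ∑ R ∈ T, k ! * (n - k - 1)! := Finset.sum_le_sum hbound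
    _ = k ! * (n - k - 1)! * T.card := by rw [Finset.sum_const, smul_eq_mul, mul_comm]

/-- Lemma 3 of the paper: `X_{k,l}(σ)` counts the regions created by the insertion of
the `k`-th object (empty at stage `k` with a defining object at position `k-1`) that are
in conflict with the `l`-th inserted object (`k < l`).  Assuming that, for each region
`F`, the conditional probability — given that `F` is empty at stage `k` and conflicts
with the `l`-th object — that one of its at most `b` defining objects is inserted `k`-th
is at most `b/k` (stated as a counting inequality), the expected value of `X_{k,l}` is at
most `(b/k) · f'(k+1)/(k+1)`, where `f'(r)` is the expected number of regions defined by a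
uniform random `r`-sample having exactly one conflict with an object of the sample. -/
theorem expected_X_le
    (n b k l : ℕ) (hk : 1 ≤ k) (hkl : k < l) (hln : l ≤ n)
    {Region : Type} [Fintype Region] (D : Region → Finset (Fin n))
    (conflict : Fin n → Region → Prop) [∀ o F, Decidable (conflict o F)]
    (hD : ∀ F, (D F).card ≤ b)
    (hcond : ∀ F : Region,
      (k : ℝ) * ((Finset.univ.filter (fun σ : Equiv.Perm (Fin n) =>
          D F ⊆ firstObjects n σ k ∧
          (∀ x ∈ firstObjects n σ k, ¬ conflict x F) ∧
          conflict (σ ⟨l - 1, by omega⟩) F ∧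
          σ ⟨k - 1, by omega⟩ ∈ D F)).card : ℝ)
        ≤ (b : ℝ) * ((Finset.univ.filter (fun σ : Equiv.Perm (Fin n) =>
          D F ⊆ firstObjects n σ k ∧
          (∀ x ∈ firstObjects n σ k, ¬ conflict x F) ∧
          conflict (σ ⟨l - 1, by omega⟩) F)).card : ℝ)) :
    (∑ σ : Equiv.Perm (Fin n),
        ((Finset.univ.filter (fun F : Region =>
          D F ⊆ firstObjects n σ k ∧
          (∀ x ∈ firstObjects n σ k, ¬ conflict x F) ∧
          conflict (σ ⟨l - 1, by omega⟩) F ∧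
          σ ⟨k - 1, by omega⟩ ∈ D F)).card : ℝ))
      / (Nat.factorial n : ℝ)
    ≤ ((b : ℝ) / k) *
        (((∑ R ∈ Finset.univ.powersetCard (k + 1),
            ((Finset.univ.filter (fun F : Region =>
              D F ⊆ R ∧ (R.filter (fun x => conflict x F)).card = 1)).card : ℝ))
          / (Nat.choose n (k + 1) : ℝ)) / ((k : ℝ) + 1)) := by
  classical
  have hkn : k < n := lt_of_lt_of_le hkl hln
  have hk1n : k + 1 ≤ n := hkn
  have hln' : l - 1 < n := by omega
  have hkn' : k - 1 < n := by omega
  -- restate the goal with fixed choices of the `Fin` elements (definitionally equal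
  -- by proof irrelevance)
  suffices h : (∑ σ : Equiv.Perm (Fin n),
        ((Finset.univ.filter (fun F : Region =>
          D F ⊆ firstObjects n σ k ∧
          (∀ x ∈ firstObjects n σ k, ¬ conflict x F) ∧
          conflict (σ ⟨l - 1, hln'⟩) F ∧
          σ ⟨k - 1, hkn'⟩ ∈ D F)).card : ℝ))
      / (Nat.factorial n : ℝ)
    ≤ ((b : ℝ) / k) *
        (((∑ R ∈ Finset.univ.powersetCard (k + 1),
            ((Finset.univ.filter (fun F : Region =>
              D F ⊆ R ∧ (R.filter (fun x => conflict x F)).card = 1)).card : ℝ))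
          / (Nat.choose n (k + 1) : ℝ)) / ((k : ℝ) + 1)) by exact h
  set al : Fin n := ⟨l - 1, hln'⟩ with hal
  set ak : Fin n := ⟨k - 1, hkn'⟩ with hak
  set N1 : Region → ℕ := fun F => (Finset.univ.filter (fun σ : Equiv.Perm (Fin n) =>
          D F ⊆ firstObjects n σ k ∧
          (∀ x ∈ firstObjects n σ k, ¬ conflict x F) ∧
          conflict (σ al) F ∧ σ ak ∈ D F)).card with hN1
  set N2 : Region → ℕ := fun F => (Finset.univ.filter (fun σ : Equiv.Perm (Fin n) =>
          D F ⊆ firstObjects n σ k ∧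
          (∀ x ∈ firstObjects n σ k, ¬ conflict x F) ∧
          conflict (σ al) F)).card with hN2
  set K : ℕ := Nat.factorial k * Nat.factorial (n - k - 1) with hK
  set S3 : ℕ := ∑ R ∈ Finset.univ.powersetCard (k + 1),
      (Finset.univ.filter (fun F : Region =>
        D F ⊆ R ∧ (R.filter (fun x => conflict x F)).card = 1)).card with hS3
  -- Step 1: exchange the order of summation in the numerator
  have hswap : (∑ σ : Equiv.Perm (Fin n),
        ((Finset.univ.filter (fun F : Region =>
          D F ⊆ firstObjects n σ k ∧
          (∀ x ∈ firstObjects n σ k, ¬ conflict x F) ∧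
          conflict (σ al) F ∧ σ ak ∈ D F)).card : ℝ))
      = ((∑ F : Region, N1 F : ℕ) : ℝ) := by
    rw [Nat.cast_sum]
    norm_cast
    exact swap_count univ univ (fun (σ : Equiv.Perm (Fin n)) (F : Region) =>
        D F ⊆ firstObjects n σ k ∧
        (∀ x ∈ firstObjects n σ k, ¬ conflict x F) ∧
        conflict (σ al) F ∧ σ ak ∈ D F)
  -- Step 2: apply the conditional-probability hypothesis
  have h1 : (k : ℝ) * ((∑ F : Region, N1 F : ℕ) : ℝ)
      ≤ (b : ℝ) * ((∑ F : Region, N2 F : ℕ) : ℝ) := by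
    rw [Nat.cast_sum, Nat.cast_sum, Finset.mul_sum, Finset.mul_sum]
    exact Finset.sum_le_sum (fun F _ => hcond F)
  -- Step 3: count permutations via (k+1)-subsets
  have h2 : (∑ F : Region, N2 F) ≤ K * S3 := by
    calc (∑ F : Region, N2 F)
        ≤ ∑ F : Region, K * ((univ.powersetCard (k+1)).filter
            (fun R => D F ⊆ R ∧ (R.filter (fun x => conflict x F)).card = 1)).card :=
          Finset.sum_le_sum (fun F _ => step2 hk hkl hln D conflict al rfl F)
      _ = K * ∑ F : Region, ((univ.powersetCard (k+1)).filter
            (fun R => D F ⊆ R ∧ (R.filter (fun x => conflict x F)).card = 1)).card := by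
          rw [Finset.mul_sum]
      _ = K * S3 := by
          rw [hS3, swap_count univ (univ.powersetCard (k+1))
            (fun (F : Region) (R : Finset (Fin n)) =>
              D F ⊆ R ∧ (R.filter (fun x => conflict x F)).card = 1)]
  -- Step 4: arithmetic
  have hfact : Nat.factorial n = Nat.choose n (k+1) * ((k+1) * K) := by
    rw [hK, ← Nat.choose_mul_factorial_mul_factorial hk1n, Nat.factorial_succ]
    have hnk : n - (k+1) = n - k - 1 := by omega
    rw [hnk]; ring
  have hC : (0:ℝ) < (Nat.choose n (k+1) : ℝ) := by
    exact_mod_cast Nat.choose_pos hk1n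
  have hkpos : (0:ℝ) < (k:ℝ) := by exact_mod_cast hk
  have hnf : (0:ℝ) < (Nat.factorial n : ℝ) := by
    exact_mod_cast Nat.factorial_pos n
  have hS3c : (∑ R ∈ Finset.univ.powersetCard (k + 1),
      ((Finset.univ.filter (fun F : Region =>
        D F ⊆ R ∧ (R.filter (fun x => conflict x F)).card = 1)).card : ℝ)) = (S3 : ℝ) := by
    rw [hS3, Nat.cast_sum]
  rw [hswap, hS3c, div_div, div_mul_div_comm,
    div_le_div_iff₀ hnf (by positivity)]
  have c1 : (k : ℝ) * ((∑ F : Region, N1 F : ℕ) : ℝ) ≤ (b : ℝ) * ((K : ℝ) * (S3 : ℝ)) := by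
    refine h1.trans ?_
    have : ((∑ F : Region, N2 F : ℕ) : ℝ) ≤ (K : ℝ) * (S3 : ℝ) := by
      exact_mod_cast h2
    exact mul_le_mul_of_nonneg_left this (Nat.cast_nonneg b)
  have c2 : (k : ℝ) * ((∑ F : Region, N1 F : ℕ) : ℝ) *
        ((Nat.choose n (k+1) : ℝ) * ((k:ℝ)+1))
      ≤ (b : ℝ) * ((K : ℝ) * (S3 : ℝ)) * ((Nat.choose n (k+1) : ℝ) * ((k:ℝ)+1)) :=
    mul_le_mul_of_nonneg_right c1 (by positivity)
  have hfactR : (Nat.factorial n : ℝ)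
      = (Nat.choose n (k+1) : ℝ) * (((k:ℝ)+1) * (K : ℝ)) := by
    exact_mod_cast hfact
  calc ((∑ F : Region, N1 F : ℕ) : ℝ) * ((k:ℝ) * ((Nat.choose n (k+1) : ℝ) * ((k:ℝ)+1)))
      = (k : ℝ) * ((∑ F : Region, N1 F : ℕ) : ℝ) *
          ((Nat.choose n (k+1) : ℝ) * ((k:ℝ)+1)) := by ring
    _ ≤ (b : ℝ) * ((K : ℝ) * (S3 : ℝ)) * ((Nat.choose n (k+1) : ℝ) * ((k:ℝ)+1)) := c2
    _ = (b : ℝ) * (S3 : ℝ) * ((Nat.choose n (k+1) : ℝ) * (((k:ℝ)+1) * (K : ℝ))) := by ring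
    _ = (b : ℝ) * (S3 : ℝ) * (Nat.factorial n : ℝ) := by rw [← hfactR]
end

section
/- If a region F is defined by at most b objects, and we condition on F being empty with respect to the first k inserted objects of a uniformly random ordering with all of F's defining objects among the first k, then the probability that one of F's defining objects is the k-th inserted object is at most b/k. -/
open Finset

lemma firstObjects_mul_swap (n k : ℕ) (σ : Equiv.Perm (Fin n)) (a c : Fin n)
    (ha : (a : ℕ) < k) (hc : (c : ℕ) < k) :
    firstObjects n (σ * Equiv.swap a c) k = firstObjects n σ k := by
  unfold firstObjects
  ext x
  simp only [mem_image, mem_filter, mem_univ, true_and, Equiv.Perm.mul_apply]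
  constructor
  · rintro ⟨i, hi, rfl⟩
    refine ⟨Equiv.swap a c i, ?_, rfl⟩
    by_cases h1 : i = a
    · simpa [h1, Equiv.swap_apply_left] using hc
    by_cases h2 : i = c
    · simpa [h2, Equiv.swap_apply_right] using ha
    · simpa [Equiv.swap_apply_of_ne_of_ne h1 h2] using hi
  · rintro ⟨i, hi, rfl⟩
    refine ⟨Equiv.swap a c i, ?_, by simp⟩
    by_cases h1 : i = a
    · simpa [h1, Equiv.swap_apply_left] using hc
    by_cases h2 : i = c
    · simpa [h2, Equiv.swap_apply_right] using ha
    · simpa [Equiv.swap_apply_of_ne_of_ne h1 h2] using hi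

/-- For a uniformly random ordering of `n` objects, fix a region determined by a set
`DF` of at most `b` defining objects and an arbitrary conflict predicate.  Conditioned on
the region being empty at stage `k` (all of `DF` among the first `k` inserted objects and
no conflict among the first `k`), the probability that one of the defining objects is the
`k`-th inserted object is at most `b/k`; stated as the counting inequality
`k · #{good ∧ defining object k-th} ≤ b · #{good}`. -/
theorem cond_prob_defining_last_le
    (n b k : ℕ) (hk : 1 ≤ k) (hkn : k ≤ n)
    (DF : Finset (Fin n)) (hDF : DF.card ≤ b)
    (conflict : Fin n → Prop) [DecidablePred conflict] :
    k * ((Finset.univ.filter (fun σ : Equiv.Perm (Fin n) =>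
        DF ⊆ firstObjects n σ k ∧
        (∀ x ∈ firstObjects n σ k, ¬ conflict x) ∧
        σ ⟨k - 1, by omega⟩ ∈ DF)).card)
      ≤ b * ((Finset.univ.filter (fun σ : Equiv.Perm (Fin n) =>
        DF ⊆ firstObjects n σ k ∧
        (∀ x ∈ firstObjects n σ k, ¬ conflict x))).card) := by
  classical
  set m : Fin n := ⟨k - 1, by omega⟩ with hm
  have hmk : (m : ℕ) < k := by simp [hm]; omega
  set P : Equiv.Perm (Fin n) → Prop := fun σ =>
    DF ⊆ firstObjects n σ k ∧ (∀ x ∈ firstObjects n σ k, ¬ conflict x) with hP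
  set A : Finset (Equiv.Perm (Fin n)) := Finset.univ.filter P with hA
  set Jk : Finset (Fin n) := Finset.univ.filter (fun j : Fin n => (j : ℕ) < k) with hJ
  -- card of Jk is k
  have hJcard : Jk.card = k := by
    have he : Jk = Finset.map (Fin.castLEEmb hkn) Finset.univ := by
      ext x
      simp only [hJ, mem_filter, mem_univ, true_and, Finset.mem_map, Fin.castLEEmb,
        Function.Embedding.coeFn_mk]
      constructor
      · intro hx
        exact ⟨⟨(x : ℕ), hx⟩, by ext; simp [Fin.castLE]⟩
      · rintro ⟨y, rfl⟩
        simp [Fin.castLE]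
    rw [he, Finset.card_map, Finset.card_univ, Fintype.card_fin]
  -- for each j in Jk, the set of good σ with σ j ∈ DF has the same card as with σ m ∈ DF
  have hBj : ∀ j ∈ Jk, (Finset.univ.filter (fun σ => P σ ∧ σ j ∈ DF)).card
      = (Finset.univ.filter (fun σ => P σ ∧ σ m ∈ DF)).card := by
    intro j hj
    rw [hJ, mem_filter] at hj
    have hjk : (j : ℕ) < k := hj.2
    apply Finset.card_bij' (fun σ _ => σ * Equiv.swap j m) (fun σ _ => σ * Equiv.swap j m)
    · intro σ hσ
      rw [mem_filter] at hσ ⊢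
      obtain ⟨_, hPσ, hσj⟩ := hσ
      refine ⟨mem_univ _, ?_, ?_⟩
      · rw [hP]
        constructor
        · rw [firstObjects_mul_swap n k σ j m hjk hmk]; exact hPσ.1
        · rw [firstObjects_mul_swap n k σ j m hjk hmk]; exact hPσ.2
      · simpa [Equiv.Perm.mul_apply, Equiv.swap_apply_right] using hσj
    · intro σ hσ
      rw [mem_filter] at hσ ⊢
      obtain ⟨_, hPσ, hσm⟩ := hσ
      refine ⟨mem_univ _, ?_, ?_⟩
      · rw [hP]
        constructor
        · rw [firstObjects_mul_swap n k σ j m hjk hmk]; exact hPσ.1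
        · rw [firstObjects_mul_swap n k σ j m hjk hmk]; exact hPσ.2
      · simpa [Equiv.Perm.mul_apply, Equiv.swap_apply_left] using hσm
    · intro σ _; simp [mul_assoc]
    · intro σ _; simp [mul_assoc]
  -- for each good σ, #{j ∈ Jk : σ j ∈ DF} = DF.card
  have hcount : ∀ σ ∈ A, (Jk.filter (fun j => σ j ∈ DF)).card = DF.card := by
    intro σ hσ
    rw [hA, mem_filter] at hσ
    apply Finset.card_bij (fun j _ => σ j)
    · intro j hj; rw [mem_filter] at hj; exact hj.2
    · intro j₁ h₁ j₂ h₂ he; exact σ.injective he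
    · intro d hd
      have := hσ.2.1 hd
      unfold firstObjects at this
      rw [mem_image] at this
      obtain ⟨i, hi, rfl⟩ := this
      rw [mem_filter] at hi
      exact ⟨i, by rw [mem_filter, hJ, mem_filter]; exact ⟨⟨mem_univ _, hi.2⟩, hd⟩, rfl⟩
  -- double counting
  calc k * (Finset.univ.filter (fun σ : Equiv.Perm (Fin n) =>
        DF ⊆ firstObjects n σ k ∧
        (∀ x ∈ firstObjects n σ k, ¬ conflict x) ∧
        σ m ∈ DF)).card
      = ∑ j ∈ Jk, (Finset.univ.filter (fun σ => P σ ∧ σ j ∈ DF)).card := by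
        rw [Finset.sum_congr rfl hBj, Finset.sum_const, hJcard, smul_eq_mul]
        congr 2
        apply Finset.filter_congr
        intro σ _
        simp only [hP, and_assoc]
    _ = ∑ j ∈ Jk, (A.filter (fun σ => σ j ∈ DF)).card := by
        apply Finset.sum_congr rfl
        intro j _
        rw [hA, Finset.filter_filter]
    _ = ∑ σ ∈ A, (Jk.filter (fun j => σ j ∈ DF)).card := by
        simp only [Finset.card_filter]
        exact Finset.sum_comm
    _ ≤ ∑ σ ∈ A, b := by
        apply Finset.sum_le_sum
        intro σ hσ
        rw [hcount σ hσ]; exact hDF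
    _ = b * A.card := by rw [Finset.sum_const, smul_eq_mul, mul_comm]
end

section
/- With key values N_i = ⌊n / log^{(i)} n⌋, the expected cost of inserting objects between key values N_i and N_{i+1}, namely ∑_{N_i < j ≤ N_{i+1}} C·log(j/N_i), is O(n). -/
open Finset

/-- `iterLog i x` is the `i`-fold iterated natural logarithm of `x`
(`iterLog 0 x = x`). -/
noncomputable def iterLog : ℕ → ℝ → ℝ
  | 0, x => x
  | (i + 1), x => Real.log (iterLog i x)

lemma half_le_floor {x : ℝ} (hx : 1 ≤ x) : x / 2 ≤ (Nat.floor x : ℝ) := by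
  rcases le_or_gt x 2 with h | h
  · have h1 : 1 ≤ Nat.floor x := Nat.floor_pos.mpr hx
    have h2 : (1 : ℝ) ≤ (Nat.floor x : ℝ) := by exact_mod_cast h1
    linarith
  · have h1 : x - 1 < (Nat.floor x : ℝ) := Nat.sub_one_lt_floor x
    linarith

/-- With key values `N_i = ⌊n / log^{(i)} n⌋` (iterated natural logarithm,
`log^{(0)} n = n`), and provided `n` is large enough that `log^{(i+1)} n ≥ 1`, the
expected cost of inserting the objects between key values `N_i` and `N_{i+1}`, namely
`∑_{N_i < j ≤ N_{i+1}} C·log(j/N_i)`, is `O(n)`: it is at most `C'·n` for a constant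
`C'` depending only on `C`, independent of `i` and `n`. -/
theorem cost_between_key_values (C : ℝ) (hC : 0 < C) :
    ∃ C' : ℝ, ∀ (n i : ℕ), 1 ≤ iterLog (i + 1) n →
      ∑ j ∈ Finset.Ioc (Nat.floor ((n : ℝ) / iterLog i n))
            (Nat.floor ((n : ℝ) / iterLog (i + 1) n)),
          C * Real.log ((j : ℝ) / (Nat.floor ((n : ℝ) / iterLog i n) : ℝ))
        ≤ C' * n := by
  refine ⟨2 * C, fun n i hL' => ?_⟩
  set L : ℝ := iterLog i n with hLdef
  set L' : ℝ := iterLog (i + 1) n with hL'def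
  have hLL' : L' = Real.log L := by rw [hL'def, hLdef, iterLog]
  set A : ℕ := Nat.floor ((n : ℝ) / L) with hAdef
  set B : ℕ := Nat.floor ((n : ℝ) / L') with hBdef
  rcases Nat.eq_zero_or_pos A with hA0 | hA1
  · -- all terms are zero since the denominator is zero
    have : ∀ j ∈ Finset.Ioc A B,
        C * Real.log ((j : ℝ) / (A : ℝ)) = 0 := by
      intro j _
      rw [hA0]
      simp
    rw [Finset.sum_congr rfl this, Finset.sum_const_zero]
    positivity
  · -- main case : 1 ≤ n / L, hence 0 < L ≤ n
    have hx : (1 : ℝ) ≤ (n : ℝ) / L := Nat.floor_pos.mp hA1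
    have hn0 : (0 : ℝ) < (n : ℝ) := by
      by_contra h
      push_neg at h
      have hn : (n : ℝ) = 0 := le_antisymm h (Nat.cast_nonneg n)
      rw [hn, zero_div] at hx
      linarith
    have hL0 : (0 : ℝ) < L := by
      by_contra h
      push_neg at h
      have : (n : ℝ) / L ≤ 0 := div_nonpos_of_nonneg_of_nonpos hn0.le h
      linarith
    have hLn : L ≤ (n : ℝ) := by
      have := (le_div_iff₀ hL0).mp hx
      linarith
    have hL'1 : (1 : ℝ) ≤ L' := hL'
    have hL'0 : (0 : ℝ) < L' := by linarith
    have hlogL' : (0 : ℝ) ≤ Real.log L' := Real.log_nonneg hL'1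
    have hL'L : L' ≤ L := by
      rw [hLL']
      exact Real.log_le_self hL0.le
    have hAlb : (n : ℝ) / (2 * L) ≤ (A : ℝ) := by
      have := half_le_floor hx
      rw [div_div] at this
      simpa [hAdef, mul_comm] using this
    have hA0R : (0 : ℝ) < (A : ℝ) := by exact_mod_cast hA1
    have hd0 : (0 : ℝ) < (n : ℝ) / (2 * L) := by positivity
    have hBub : (B : ℝ) ≤ (n : ℝ) / L' := Nat.floor_le (by positivity)
    -- per-term bound
    have hterm : ∀ j ∈ Finset.Ioc A B,
        C * Real.log ((j : ℝ) / (A : ℝ)) ≤ C * (2 * L') := by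
      intro j hj
      rw [Finset.mem_Ioc] at hj
      have hjA : A < j := hj.1
      have hjB : (j : ℝ) ≤ (n : ℝ) / L' := le_trans (by exact_mod_cast hj.2) hBub
      have hratio : (j : ℝ) / (A : ℝ) ≤ ((n : ℝ) / L') / ((n : ℝ) / (2 * L)) :=
        div_le_div₀ (by positivity) hjB hd0 hAlb
      have heq : ((n : ℝ) / L') / ((n : ℝ) / (2 * L)) = 2 * L / L' := by
        field_simp
      rw [heq] at hratio
      have hj0 : (0 : ℝ) < (j : ℝ) / (A : ℝ) := by
        have hjpos : 0 < j := lt_of_le_of_lt (Nat.zero_le A) hjA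
        have : (0 : ℝ) < (j : ℝ) := by exact_mod_cast hjpos
        positivity
      have hlog : Real.log ((j : ℝ) / (A : ℝ)) ≤ Real.log (2 * L / L') :=
        Real.log_le_log hj0 hratio
      have hexpand : Real.log (2 * L / L') = Real.log 2 + Real.log L - Real.log L' := by
        rw [Real.log_div (by positivity) (by positivity), Real.log_mul (by norm_num) (by positivity)]
      have hlog2 : Real.log 2 ≤ 1 := by
        have := Real.log_two_lt_d9
        linarith
      have hbound : Real.log (2 * L / L') ≤ 2 * L' := by
        rw [hexpand, ← hLL']
        linarith
      have := le_trans hlog hbound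
      nlinarith
    have hsum := Finset.sum_le_card_nsmul _ _ _ hterm
    rw [nsmul_eq_mul] at hsum
    have hcard : ((Finset.Ioc A B).card : ℝ) ≤ (n : ℝ) / L' := by
      have h1 : (Finset.Ioc A B).card = B - A := Nat.card_Ioc A B
      have h2 : ((Finset.Ioc A B).card : ℝ) ≤ (B : ℝ) := by
        rw [h1]
        exact_mod_cast Nat.sub_le B A
      linarith
    have hCL' : (0 : ℝ) ≤ C * (2 * L') := by positivity
    have h3 : ((Finset.Ioc A B).card : ℝ) * (C * (2 * L')) ≤ ((n : ℝ) / L') * (C * (2 * L')) :=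
      mul_le_mul_of_nonneg_right hcard hCL'
    have h4 : ((n : ℝ) / L') * (C * (2 * L')) = 2 * C * n := by
      field_simp
    calc ∑ j ∈ Finset.Ioc A B, C * Real.log ((j : ℝ) / (A : ℝ))
        ≤ ((Finset.Ioc A B).card : ℝ) * (C * (2 * L')) := hsum
      _ ≤ ((n : ℝ) / L') * (C * (2 * L')) := h3
      _ = 2 * C * n := h4
end

section
/- Two edges of a Euclidean minimum spanning tree incident to the same vertex form an angle greater than π/3; consequently the maximal degree of any vertex in a planar EMST is at most 6 (in fact less than 6, i.e., at most 5 for distinct points, but at most 6 suffices). -/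
/-!
If two edges `vu`, `vw` of a minimum spanning tree met at an angle below `π/3`, the law of
cosines would make `uw` strictly shorter than the longer of the two; exchanging that edge for
`uw` keeps the graph connected and lowers its weight.  Given the angle bound, the oriented
angles of the neighbours of `v`, measured from one of them, fall into six half-open sectors of
width `π/3`, no two in the same sector, so `v` has at most six neighbours.
-/

open Finset
open scoped Classical

/-- The total Euclidean length of the edges of a graph on a finite point set `P`
in the plane. -/
noncomputable def emstWeight (P : Finset (EuclideanSpace ℝ (Fin 2)))
    (G : SimpleGraph P) : ℝ :=
  ∑ e ∈ Finset.univ.filter (fun e : Sym2 P => e ∈ G.edgeSet),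
    Sym2.lift ⟨fun (a b : P) => dist (a : EuclideanSpace ℝ (Fin 2))
      (b : EuclideanSpace ℝ (Fin 2)), fun a b => dist_comm _ _⟩ e

open EuclideanGeometry Real
open scoped EuclideanSpace

theorem Int.abs_sub_lt_of_ceil_div_eq_ceil_div {K : Type*} [Field K] [LinearOrder K]
    [IsStrictOrderedRing K] [FloorRing K] {a b c : K} (hc : 0 < c) (h : ⌈a / c⌉ = ⌈b / c⌉) :
    |a - b| < c := by
  have hfloor : ⌊-(a / c)⌋ = ⌊-(b / c)⌋ := by rw [Int.floor_neg, Int.floor_neg, h]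
  have := Int.abs_sub_lt_one_of_floor_eq_floor hfloor
  rwa [neg_sub_neg, ← sub_div, abs_div, abs_of_pos hc, div_lt_one hc, abs_sub_comm] at this

namespace Real.Angle

theorem abs_toReal_coe_le (θ : ℝ) : |(θ : Angle).toReal| ≤ |θ| := by
  by_cases h : θ ∈ Set.Ioc (-π) π
  · rw [toReal_coe_eq_self_iff_mem_Ioc.2 h]
  · have hθ : π ≤ |θ| := by
      rw [Set.mem_Ioc, not_and_or, not_lt, not_le] at h
      rcases h with h | h
      · exact le_abs.2 (Or.inr (by linarith))
      · exact le_abs.2 (Or.inl h.le)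
    exact (abs_toReal_le_pi _).trans hθ

theorem ceil_toReal_div_pi_div_three_mem_Icc (θ : Angle) :
    ⌈θ.toReal / (π / 3)⌉ ∈ Finset.Icc (-2 : ℤ) 3 := by
  have hπ : 0 < π / 3 := by positivity
  rw [Finset.mem_Icc, Int.ceil_le, ← Int.sub_one_lt_iff, Int.lt_ceil, div_le_iff₀ hπ,
    lt_div_iff₀ hπ]
  push_cast
  constructor <;> linarith [θ.neg_pi_lt_toReal, θ.toReal_le_pi]

end Real.Angle

section

variable {V P : Type*} [NormedAddCommGroup V] [InnerProductSpace ℝ V] [MetricSpace P]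
  [NormedAddTorsor V P]

theorem EuclideanGeometry.dist_lt_max_of_angle_lt_pi_div_three {p₁ p₂ p₃ : P}
    (h : ∠ p₁ p₂ p₃ < π / 3) : dist p₁ p₃ < max (dist p₁ p₂) (dist p₃ p₂) := by
  have hπ : π / 3 < π / 2 := by linarith [pi_pos]
  have h₁ : p₁ ≠ p₂ := by rintro rfl; rw [angle_self_left] at h; linarith
  have h₃ : p₃ ≠ p₂ := by rintro rfl; rw [angle_self_right] at h; linarith
  have hcos : 1 / 2 < cos (∠ p₁ p₂ p₃) := by
    rw [← cos_pi_div_three]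
    exact cos_lt_cos_of_nonneg_of_le_pi (angle_nonneg _ _ _) (by linarith [pi_pos]) h
  have ha := dist_pos.2 h₁
  have hb := dist_pos.2 h₃
  have hlaw := law_cos p₁ p₂ p₃
  refine lt_of_pow_lt_pow_left₀ 2 (le_max_of_le_left dist_nonneg) ?_
  -- `a² + b² - 2ab cos θ < a² + b² - ab ≤ (max a b)²`
  rcases le_total (dist p₁ p₂) (dist p₃ p₂) with hab | hab
  · rw [max_eq_right hab]; nlinarith [mul_pos ha hb]
  · rw [max_eq_left hab]; nlinarith [mul_pos ha hb]

variable [Fact (Module.finrank ℝ V = 2)]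

theorem EuclideanGeometry.angle_le_abs_sub_toReal_oangle [Module.Oriented ℝ V (Fin 2)]
    {p p₀ p₁ p₂ : P} (h₀ : p₀ ≠ p) (h₁ : p₁ ≠ p) (h₂ : p₂ ≠ p) :
    ∠ p₁ p p₂ ≤ |(∡ p₀ p p₂).toReal - (∡ p₀ p p₁).toReal| := by
  have hsub : ∡ p₁ p p₂ = (((∡ p₀ p p₂).toReal - (∡ p₀ p p₁).toReal : ℝ) : Real.Angle) := by
    rw [Real.Angle.coe_sub, Real.Angle.coe_toReal, Real.Angle.coe_toReal, oangle_sub_left h₀ h₁ h₂]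
  rw [angle_eq_abs_oangle_toReal h₁ h₂, hsub]
  exact Angle.abs_toReal_coe_le _

theorem EuclideanGeometry.card_le_six_of_pi_div_three_le_angle {p : P} {s : Finset P}
    (hs : ∀ x ∈ s, x ≠ p) (hangle : ∀ x ∈ s, ∀ y ∈ s, x ≠ y → π / 3 ≤ ∠ x p y) :
    s.card ≤ 6 := by
  have : FiniteDimensional ℝ V := .of_fact_finrank_eq_two
  let : Module.Oriented ℝ V (Fin 2) := ⟨(Module.finBasisOfFinrankEq ℝ V Fact.out).orientation⟩
  obtain rfl | ⟨p₀, hp₀⟩ := s.eq_empty_or_nonempty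
  · simp
  by_contra! hcard
  -- Pigeonhole on the six sectors of opening `π / 3` around `p`, measured from the ray `p p₀`.
  obtain ⟨x, hx, y, hy, hxy, hsector⟩ := Finset.exists_ne_map_eq_of_card_lt_of_maps_to
    (by simpa using hcard) fun x _ => (∡ p₀ p x).ceil_toReal_div_pi_div_three_mem_Icc
  have hlt := Int.abs_sub_lt_of_ceil_div_eq_ceil_div (by positivity) hsector.symm
  have hle := angle_le_abs_sub_toReal_oangle (hs p₀ hp₀) (hs x hx) (hs y hy)
  linarith [hangle x hx y hy hxy]

end

namespace SimpleGraph

variable {V : Type*} {G H : SimpleGraph V}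

theorem Connected.of_forall_adj_reachable (hG : G.Connected)
    (h : ∀ a b, G.Adj a b → H.Reachable a b) : H.Connected := by
  refine (connected_iff H).2 ⟨fun a b => ?_, hG.nonempty⟩
  obtain ⟨p⟩ := hG.preconnected a b
  induction p with
  | nil => rfl
  | cons hadj _ ih => exact (h _ _ hadj).trans ih

theorem Connected.exchange_edge {u v w : V} (hG : G.Connected) (hvu : G.Adj v u)
    (huw : u ≠ w) : (fromEdgeSet (insert s(u, w) (G.edgeSet \ {s(v, w)}))).Connected := by
  set H := fromEdgeSet (insert s(u, w) (G.edgeSet \ {s(v, w)}))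
  have hH : ∀ a b, G.Adj a b → s(a, b) ≠ s(v, w) → H.Adj a b := fun a b hab hne =>
    (fromEdgeSet_adj _).2 ⟨Or.inr ⟨hab, hne⟩, hab.ne⟩
  have hvw : H.Reachable v w := by
    have hvu' : H.Adj v u := hH v u hvu fun h => huw (Sym2.congr_right.1 h)
    exact hvu'.reachable.trans ((fromEdgeSet_adj _).2 ⟨Or.inl rfl, huw⟩).reachable
  refine hG.of_forall_adj_reachable fun a b hab => ?_
  by_cases hab' : s(a, b) = s(v, w)
  · rcases Sym2.eq_iff.1 hab' with ⟨rfl, rfl⟩ | ⟨rfl, rfl⟩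
    exacts [hvw, hvw.symm]
  · exact (hH a b hab hab').reachable

end SimpleGraph

local notation "ℝ²" => EuclideanSpace ℝ (Fin 2)

variable {P : Finset ℝ²}

noncomputable def edgeLength : Sym2 P → ℝ :=
  Sym2.lift ⟨fun (a b : P) => dist (a : ℝ²) b, fun a b => dist_comm (a : ℝ²) b⟩

@[simp]
theorem edgeLength_mk (a b : P) : edgeLength s(a, b) = dist (a : ℝ²) b := rfl

theorem edgeLength_nonneg (e : Sym2 P) : 0 ≤ edgeLength e := by
  induction e using Sym2.ind with
  | _ a b => rw [edgeLength_mk]; exact dist_nonneg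

theorem emstWeight_le_sub_add {G H : SimpleGraph P} {e e' : Sym2 P} (he : e ∈ G.edgeSet)
    (hH : H.edgeSet ⊆ insert e' (G.edgeSet \ {e})) :
    emstWeight P H ≤ emstWeight P G - edgeLength e + edgeLength e' := by
  set S := univ.filter (· ∈ G.edgeSet)
  have hsub : univ.filter (· ∈ H.edgeSet) ⊆ insert e' (S.erase e) := fun x hx => by
    simpa [S, and_comm] using hH (mem_filter.1 hx).2
  calc emstWeight P H ≤ ∑ x ∈ insert e' (S.erase e), edgeLength x :=
        sum_le_sum_of_subset_of_nonneg hsub fun x _ _ => edgeLength_nonneg x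
    _ ≤ edgeLength e' + ∑ x ∈ S.erase e, edgeLength x := by
        by_cases h : e' ∈ S.erase e
        · rw [insert_eq_of_mem h]; linarith [edgeLength_nonneg e']
        · rw [sum_insert h]
    _ = emstWeight P G - edgeLength e + edgeLength e' := by
        rw [sum_erase_eq_sub (by simpa [S] using he)]; unfold emstWeight edgeLength; ring

def IsEMST (P : Finset ℝ²) (T : SimpleGraph P) : Prop :=
  T.Connected ∧ ∀ T' : SimpleGraph P, T'.Connected → emstWeight P T ≤ emstWeight P T'

theorem IsEMST.dist_le_of_adj_of_adj {T : SimpleGraph P} (hT : IsEMST P T) {u v w : P}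
    (hvu : T.Adj v u) (hvw : T.Adj v w) (huw : u ≠ w) : dist (v : ℝ²) w ≤ dist (u : ℝ²) w := by
  set T' := SimpleGraph.fromEdgeSet (insert s(u, w) (T.edgeSet \ {s(v, w)}))
  have hmin := hT.2 T' (hT.1.exchange_edge hvu huw)
  have hweight := emstWeight_le_sub_add (H := T') (T.mem_edgeSet.2 hvw)
    (SimpleGraph.edgeSet_fromEdgeSet _ ▸ Set.sdiff_subset)
  rw [edgeLength_mk, edgeLength_mk] at hweight
  linarith

theorem IsEMST.pi_div_three_le_angle {T : SimpleGraph P} (hT : IsEMST P T) {u v w : P}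
    (hvu : T.Adj v u) (hvw : T.Adj v w) (huw : u ≠ w) : π / 3 ≤ ∠ (u : ℝ²) v w := by
  by_contra! hangle
  have hu : dist (u : ℝ²) v ≤ dist (u : ℝ²) w := by
    rw [dist_comm, dist_comm (u : ℝ²)]
    exact hT.dist_le_of_adj_of_adj hvw hvu huw.symm
  have hw : dist (w : ℝ²) v ≤ dist (u : ℝ²) w := by
    rw [dist_comm]
    exact hT.dist_le_of_adj_of_adj hvu hvw huw
  exact (max_le hu hw).not_gt (dist_lt_max_of_angle_lt_pi_div_three hangle)

theorem IsEMST.card_neighbors_le_six {T : SimpleGraph P} (hT : IsEMST P T) (v : P) :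
    (univ.filter (fun u : P => T.Adj v u)).card ≤ 6 := by
  rw [← card_map (Function.Embedding.subtype _)]
  refine card_le_six_of_pi_div_three_le_angle (p := (v : ℝ²)) ?_ ?_ <;>
    simp only [mem_map, mem_filter, mem_univ, true_and, Function.Embedding.coe_subtype]
  · rintro _ ⟨u, hvu, rfl⟩
    exact Subtype.coe_ne_coe.2 hvu.ne'
  · rintro _ ⟨u, hvu, rfl⟩ _ ⟨w, hvw, rfl⟩ huw
    exact hT.pi_div_three_le_angle hvu hvw (Subtype.coe_ne_coe.1 huw)

/-- Let `T` be a Euclidean minimum spanning tree of a finite set `P` of distinct points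
in the plane: a connected graph on `P` of minimum total Euclidean edge length among all
connected spanning graphs.  Then any two edges of `T` incident to a common vertex `v`
make an angle at least `π/3` at `v`, and consequently every vertex of `T` has at
most `6` neighbors. -/
theorem emst_angle_ge_and_degree_le
    (P : Finset (EuclideanSpace ℝ (Fin 2)))
    (T : SimpleGraph P)
    (hconn : T.Connected)
    (hmin : ∀ T' : SimpleGraph P, T'.Connected → emstWeight P T ≤ emstWeight P T') :
    (∀ v u w : P, T.Adj v u → T.Adj v w → u ≠ w →
      Real.pi / 3 ≤ EuclideanGeometry.angle (u : EuclideanSpace ℝ (Fin 2))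
        (v : EuclideanSpace ℝ (Fin 2)) (w : EuclideanSpace ℝ (Fin 2))) ∧
    (∀ v : P, (Finset.univ.filter (fun u : P => T.Adj v u)).card ≤ 6) := by
  have hT : IsEMST P T := ⟨hconn, hmin⟩
  exact ⟨fun _ _ _ => hT.pi_div_three_le_angle, hT.card_neighbors_le_six⟩
end

section
/- If a segment vw intersects a Delaunay edge ab of a point sample, and neither v nor w lies inside either of the two circumscribing disks of the Delaunay triangles adjacent to ab, then every disk through v and w contains a or b; hence vw cannot be a Delaunay edge of any superset containing v, w, a, b. -/
/-!
The difference `p ↦ power_D p - power_C p` of the powers of a point with respect to two circles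
is an affine function of `p` (the quadratic parts cancel; its zero set is the radical axis).
Take for `D` a disk with `v, w` on its boundary and for `C` the circumcircle of `abc`. At `v`
and `w` the difference is negative, since they lie on `D` and outside `C`. If neither `a` nor
`b` were inside `D`, the difference would be nonnegative at `a` and `b`, which lie on `C`.
The crossing point lies on both segments, so the difference would be both negative and
nonnegative there.
-/

open AffineMap EuclideanGeometry

variable {V P : Type*} [NormedAddCommGroup V] [InnerProductSpace ℝ V] [MetricSpace P]
  [NormedAddTorsor V P]

theorem dist_sq_lineMap (x z c : P) (t : ℝ) :
    dist (lineMap x z t) c ^ 2 =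
      (1 - t) * dist x c ^ 2 + t * dist z c ^ 2 - t * (1 - t) * dist x z ^ 2 := by
  have hz : z -ᵥ c = (z -ᵥ x) + (x -ᵥ c) := (vsub_add_vsub_cancel z x c).symm
  simp only [dist_eq_norm_vsub V, lineMap_apply, vadd_vsub_assoc, hz, ← norm_neg (x -ᵥ z),
    neg_vsub_eq_vsub_rev, norm_add_sq_real, norm_smul, real_inner_smul_left, Real.norm_eq_abs,
    mul_pow, sq_abs]
  ring

namespace EuclideanGeometry.Sphere

theorem power_lineMap (s : Sphere P) (x z : P) (t : ℝ) :
    s.power (lineMap x z t) =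
      (1 - t) * s.power x + t * s.power z - t * (1 - t) * dist x z ^ 2 := by
  simp only [power, dist_sq_lineMap]
  ring

theorem power_sub_power_lineMap (s₁ s₂ : Sphere P) (x z : P) (t : ℝ) :
    s₁.power (lineMap x z t) - s₂.power (lineMap x z t) =
      (1 - t) * (s₁.power x - s₂.power x) + t * (s₁.power z - s₂.power z) := by
  simp only [power_lineMap]
  ring

end EuclideanGeometry.Sphere

theorem Wbtw.power_sub_power_le_max {x y z : P} (h : Wbtw ℝ x y z) (s₁ s₂ : Sphere P) :
    s₁.power y - s₂.power y ≤ max (s₁.power x - s₂.power x) (s₁.power z - s₂.power z) := by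
  obtain ⟨t, ⟨ht₀, ht₁⟩, rfl⟩ := h
  rw [Sphere.power_sub_power_lineMap]
  exact Convex.combo_le_max _ _ (sub_nonneg.2 ht₁) ht₀ (sub_add_cancel 1 t)

theorem crossing_segment_disk_contains_endpoint_general
    (a b v w : EuclideanSpace ℝ (Fin 2))
    (o₁ : EuclideanSpace ℝ (Fin 2)) (r₁ : ℝ)
    (h₁a : dist o₁ a = r₁) (h₁b : dist o₁ b = r₁)
    (hv₁ : r₁ < dist o₁ v) (hw₁ : r₁ < dist o₁ w)
    (hcross : ∃ y : EuclideanSpace ℝ (Fin 2), Sbtw ℝ v y w ∧ Sbtw ℝ a y b) :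
    ∀ (o : EuclideanSpace ℝ (Fin 2)) (ρ : ℝ),
      dist o v = ρ → dist o w = ρ → dist o a < ρ ∨ dist o b < ρ := by
  intro o ρ hv hw
  by_contra! ⟨ha, hb⟩
  obtain ⟨y, hvyw, hayb⟩ := hcross
  let D : Sphere (EuclideanSpace ℝ (Fin 2)) := ⟨o, ρ⟩
  let C : Sphere (EuclideanSpace ℝ (Fin 2)) := ⟨o₁, r₁⟩
  have hρ : 0 ≤ ρ := hv ▸ dist_nonneg
  have hr₁ : 0 ≤ r₁ := h₁a ▸ dist_nonneg
  have on_D_outside_C {p} (hp : dist o p = ρ) (hp₁ : r₁ < dist o₁ p) :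
      D.power p - C.power p < 0 := by
    simp only [D, C, Sphere.power, dist_comm p, hp]
    linarith [pow_lt_pow_left₀ hp₁ hr₁ two_ne_zero]
  have on_C_not_inside_D {p} (hp₁ : dist o₁ p = r₁) (hp : ρ ≤ dist o p) :
      C.power p - D.power p ≤ 0 := by
    simp only [D, C, Sphere.power, dist_comm p, hp₁]
    linarith [pow_le_pow_left₀ hρ hp 2]
  have hy_vw := (hvyw.wbtw.power_sub_power_le_max D C).trans_lt
    (max_lt (on_D_outside_C hv hv₁) (on_D_outside_C hw hw₁))
  have hy_ab := (hayb.wbtw.power_sub_power_le_max C D).trans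
    (max_le (on_C_not_inside_D h₁a ha) (on_C_not_inside_D h₁b hb))
  linarith

/-- Let `ab` be a Delaunay edge of a planar point sample, adjacent to triangles `abc` and
`abd` whose circumdisks (centers `o₁, o₂`, radii `r₁, r₂`) are empty of sample points (in
particular `d` is not inside the circumdisk of `abc` and `c` is not inside that of `abd`).
If a segment `vw` crosses the segment `ab` (they meet at a point strictly between `v,w`
and strictly between `a,b`) and neither `v` nor `w` lies inside either circumdisk (both
lie strictly outside), then every disk having `v` and `w` on its boundary contains `a` or
`b` in its interior — hence `vw` cannot be a Delaunay edge of any superset containing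
`v, w, a, b`. -/
theorem crossing_segment_disk_contains_endpoint
    (a b c d v w : EuclideanSpace ℝ (Fin 2)) (hab : a ≠ b)
    (o₁ o₂ : EuclideanSpace ℝ (Fin 2)) (r₁ r₂ : ℝ)
    (h₁a : dist o₁ a = r₁) (h₁b : dist o₁ b = r₁) (h₁c : dist o₁ c = r₁)
    (h₂a : dist o₂ a = r₂) (h₂b : dist o₂ b = r₂) (h₂d : dist o₂ d = r₂)
    (hd : r₁ ≤ dist o₁ d) (hc : r₂ ≤ dist o₂ c)
    (hv₁ : r₁ < dist o₁ v) (hw₁ : r₁ < dist o₁ w)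
    (hv₂ : r₂ < dist o₂ v) (hw₂ : r₂ < dist o₂ w)
    (hcross : ∃ y : EuclideanSpace ℝ (Fin 2), Sbtw ℝ v y w ∧ Sbtw ℝ a y b) :
    ∀ (o : EuclideanSpace ℝ (Fin 2)) (ρ : ℝ),
      dist o v = ρ → dist o w = ρ → dist o a < ρ ∨ dist o b < ρ :=
  crossing_segment_disk_contains_endpoint_general a b v w o₁ r₁ h₁a h₁b hv₁ hw₁ hcross
end
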